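/- Let g_1,...,g_n be F_q-linearly independent in F_{q^m}, r in F_{q^m}^n, and let {b^(1), b^(2)} be a minimal basis (with respect to the (0,k-1)-weighted term-over-position order) of the interpolation module M(r), with lpos(b^(1)) = 1 and lpos(b^(2)) = 2. Then the (0,k-1)-weighted q-degrees l_1 and l_2 of b^(1) and b^(2) satisfy l_1 + l_2 = n + k - 1. -/

import Mathlib

open Polynomial

/-- A `q`-linearized polynomial: all monomials have exponent a power of `q`. -/
def IsLin {F : Type*} [Field F] (q : ℕ) (f : Polynomial F) : Prop :=
  ∀ i ∈ f.support, ∃ j : ℕ, i = q ^ j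

/-- A vector of `q`-linearized polynomials. -/
def IsLinVec {F : Type*} [Field F] (q : ℕ) {l : ℕ} (f : Fin l → Polynomial F) : Prop :=
  ∀ i, IsLin q (f i)

/-- A monomial `x^{q^k} e_pos` of `L_q(x,q^m)^l`. -/
structure Mon (l : ℕ) where
  k : ℕ
  pos : Fin l

/-- `lt` is a monomial order on `L_q(x,q^m)^l`: a total (strict) order such that
left composition by `x^{q^j}` (which sends `x^{q^k} e_i` to `x^{q^{j+k}} e_i`)
increases monomials (for `j > 0`) and preserves the order. -/
structure IsMonOrder {l : ℕ} (lt : Mon l → Mon l → Prop) : Prop where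
  irrefl : ∀ m, ¬ lt m m
  trans : ∀ a b c, lt a b → lt b c → lt a c
  total : ∀ a b, lt a b ∨ a = b ∨ lt b a
  comp_gt : ∀ (m : Mon l) (j : ℕ), 0 < j → lt m ⟨j + m.k, m.pos⟩
  comp_mono : ∀ (m1 m2 : Mon l) (j : ℕ), lt m1 m2 → lt ⟨j + m1.k, m1.pos⟩ ⟨j + m2.k, m2.pos⟩

/-- The monomial `x^{q^k} e_pos` occurs in `f`. -/
def MonOf {F : Type*} [Field F] (q : ℕ) {l : ℕ} (f : Fin l → Polynomial F)
    (mo : Mon l) : Prop :=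
  q ^ mo.k ∈ (f mo.pos).support

/-- `mo` is the leading monomial of `f` with respect to the monomial order `lt`. -/
def IsLM {F : Type*} [Field F] (q : ℕ) {l : ℕ} (lt : Mon l → Mon l → Prop)
    (f : Fin l → Polynomial F) (mo : Mon l) : Prop :=
  MonOf q f mo ∧ ∀ mo', MonOf q f mo' → mo' = mo ∨ lt mo' mo

/-- `M` is a left submodule of `L_q(x,q^m)^l` over the ring of `q`-linearized
polynomials with composition. -/
def IsLinSubmodule {F : Type*} [Field F] (q : ℕ) {l : ℕ}
    (M : Set (Fin l → Polynomial F)) : Prop :=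
  (∀ f ∈ M, IsLinVec q f) ∧ ((fun _ => 0) ∈ M) ∧
  (∀ f ∈ M, ∀ g ∈ M, (fun j => f j + g j) ∈ M) ∧
  (∀ a : Polynomial F, IsLin q a → ∀ f ∈ M, (fun j => a.comp (f j)) ∈ M)

/-- `B` is a basis of `M`: its members lie in `M`, generate `M` by left combinations
`∑ aᵢ ∘ bᵢ` with `q`-linearized coefficients, and are linearly independent. -/
def IsBasisOf {F : Type*} [Field F] (q : ℕ) {l : ℕ} {ι : Type*} [Fintype ι]
    (M : Set (Fin l → Polynomial F)) (B : ι → Fin l → Polynomial F) : Prop :=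
  (∀ i, B i ∈ M) ∧
  (∀ f ∈ M, ∃ a : ι → Polynomial F, (∀ i, IsLin q (a i)) ∧
    f = fun j => ∑ i, (a i).comp (B i j)) ∧
  (∀ a : ι → Polynomial F, (∀ i, IsLin q (a i)) →
    ((fun j => ∑ i, (a i).comp (B i j)) = fun _ => (0 : Polynomial F)) → ∀ i, a i = 0)

/-- The `(w 0, ..., w (l-1))`-weighted term-over-position monomial order. -/
def wlt {l : ℕ} (w : Fin l → ℕ) (m1 m2 : Mon l) : Prop :=
  m1.k + w m1.pos < m2.k + w m2.pos ∨
  (m1.k + w m1.pos = m2.k + w m2.pos ∧ m1.pos < m2.pos)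

/-- `f` has `(w 0, ..., w (l-1))`-weighted `q`-degree `dd`. -/
def WDegIs {F : Type*} [Field F] (q : ℕ) {l : ℕ} (w : Fin l → ℕ)
    (f : Fin l → Polynomial F) (dd : ℕ) : Prop :=
  (∃ mo : Mon l, MonOf q f mo ∧ mo.k + w mo.pos = dd) ∧
  (∀ mo : Mon l, MonOf q f mo → mo.k + w mo.pos ≤ dd)

/-- The interpolation module `M(r)`: all pairs `[f, g]` of `q`-linearized polynomials
with `f(g i) + g(r i) = 0` for all `i`. -/
def InterpMod {F : Type*} [Field F] (q : ℕ) {n : ℕ} (g r : Fin n → F) :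
    Set (Fin 2 → Polynomial F) :=
  {p | IsLinVec q p ∧ ∀ i, (p 0).eval (g i) + (p 1).eval (r i) = 0}


/-!
Fix `N` large and let `V_N` be the space of pairs `[f₀, f₁]` of `q`-linearized polynomials of
`(w₀, w₁)`-weighted `q`-degree at most `N`. The evaluation `f ↦ (f₀(gᵢ) + f₁(rᵢ))ᵢ` maps `V_N`
onto `F^n`: every `F_q`-linear map `F → F` is a `q`-linearized polynomial of `q`-degree `< m`, and
the `gᵢ` are `F_q`-linearly independent. Its kernel is `M(r) ∩ V_N`, and by the predictable degree
property of the minimal basis `{b⁰, b¹}` (leading terms in different positions cannot cancel), each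
of its elements is uniquely `a₀ ∘ b⁰ + a₁ ∘ b¹` with `qdeg aᵢ ≤ N - lᵢ`. Comparing `F`-dimensions,
`(N - w₀ + 1) + (N - w₁ + 1) = n + (N - l₀ + 1) + (N - l₁ + 1)`, so `l₀ + l₁ = n + w₀ + w₁`.
-/

open Polynomial

section QLinearized

variable {F : Type*} [Field F] {q : ℕ}

variable (F) in
noncomputable def qLinLE (q N : ℕ) : Submodule F F[X] :=
  Submodule.span F (Set.range fun t : Fin (N + 1) => (X : F[X]) ^ q ^ (t : ℕ))

lemma mem_qLinLE {N : ℕ} {f : F[X]} :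
    f ∈ qLinLE F q N ↔ ∀ i ∈ f.support, ∃ t ≤ N, i = q ^ t := by
  have : qLinLE F q N = Submodule.span F
      (basisMonomials F '' Set.range fun t : Fin (N + 1) => q ^ (t : ℕ)) := by
    rw [← Set.range_comp]
    simp [qLinLE, Function.comp_def, X_pow_eq_monomial]
  rw [this, Module.Basis.mem_span_image]
  simp only [basisMonomials, Set.subset_def, Finset.mem_coe, Set.mem_range]
  exact forall_congr' fun i => imp_congr Iff.rfl
    ⟨fun ⟨t, ht⟩ => ⟨t, Nat.lt_succ_iff.1 t.2, ht.symm⟩,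
      fun ⟨t, ht, h⟩ => ⟨⟨t, Nat.lt_succ_of_le ht⟩, h.symm⟩⟩

instance (q N : ℕ) : FiniteDimensional F (qLinLE F q N) :=
  FiniteDimensional.span_of_finite F (Set.finite_range _)

lemma finrank_qLinLE (hq : 1 < q) (N : ℕ) : Module.finrank F (qLinLE F q N) = N + 1 := by
  rw [qLinLE, finrank_span_eq_card, Fintype.card_fin]
  have := (basisMonomials F).linearIndependent.comp (fun t : Fin (N + 1) => q ^ (t : ℕ))
    ((Nat.pow_right_injective hq).comp Fin.val_injective)
  simpa [Function.comp_def, X_pow_eq_monomial] using this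

lemma qLinLE_mono {N N' : ℕ} (h : N ≤ N') : qLinLE F q N ≤ qLinLE F q N' := fun _ hf =>
  mem_qLinLE.2 fun i hi => (mem_qLinLE.1 hf i hi).imp fun _ ⟨ht, e⟩ => ⟨ht.trans h, e⟩

lemma IsLin.of_mem_qLinLE {N : ℕ} {f : F[X]} (hf : f ∈ qLinLE F q N) : IsLin q f :=
  fun i hi => (mem_qLinLE.1 hf i hi).imp fun _ => And.right

lemma mem_qLinLE_iff (hq : 1 < q) {N : ℕ} {f : F[X]} :
    f ∈ qLinLE F q N ↔ IsLin q f ∧ ∀ t, q ^ t ∈ f.support → t ≤ N := by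
  refine ⟨fun hf => ⟨IsLin.of_mem_qLinLE hf, fun t ht => ?_⟩, fun ⟨hf, hN⟩ => ?_⟩
  · obtain ⟨t', ht', e⟩ := mem_qLinLE.1 hf _ ht
    exact Nat.pow_right_injective hq e ▸ ht'
  · exact mem_qLinLE.2 fun i hi => by
      obtain ⟨t, rfl⟩ := hf i hi
      exact ⟨t, hN t hi, rfl⟩

lemma natDegree_le_of_mem_qLinLE (hq : 0 < q) {N : ℕ} {f : F[X]} (hf : f ∈ qLinLE F q N) :
    f.natDegree ≤ q ^ N := by
  rcases eq_or_ne f 0 with rfl | h0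
  · simp
  obtain ⟨t, ht, he⟩ := mem_qLinLE.1 hf _ (natDegree_mem_support_of_nonzero h0)
  exact he ▸ Nat.pow_le_pow_right hq ht

lemma IsLin.add {f g : F[X]} (hf : IsLin q f) (hg : IsLin q g) : IsLin q (f + g) :=
  fun i hi => (Finset.mem_union.1 (support_add hi)).elim (hf i) (hg i)

variable {n : ℕ}

noncomputable def interpEval (q : ℕ) (g r : Fin n → F) (D : Fin 2 → ℕ) :
    (∀ j, qLinLE F q (D j)) →ₗ[F] Fin n → F where
  toFun f i := (f 0 : F[X]).eval (g i) + (f 1 : F[X]).eval (r i)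
  map_add' f f' := by ext; simp only [Pi.add_apply, Submodule.coe_add, eval_add]; ring
  map_smul' c f := by ext; simp [mul_add]

lemma interpEval_eq_zero_iff {g r : Fin n → F} {D : Fin 2 → ℕ} (f : ∀ j, qLinLE F q (D j)) :
    interpEval q g r D f = 0 ↔ (fun j => (f j : F[X])) ∈ InterpMod q g r := by
  simp only [InterpMod, Set.mem_ofPred_eq, funext_iff, Pi.zero_apply]
  exact ⟨fun h => ⟨fun j => IsLin.of_mem_qLinLE (f j).2, h⟩, And.right⟩

noncomputable def sumCompMap (q : ℕ) (B : Fin 2 → Fin 2 → F[X]) (D E : Fin 2 → ℕ)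
    (h : ∀ a : ∀ i, qLinLE F q (D i), ∀ j, ∑ i, (a i : F[X]).comp (B i j) ∈ qLinLE F q (E j)) :
    (∀ i, qLinLE F q (D i)) →ₗ[F] ∀ j, qLinLE F q (E j) where
  toFun a j := ⟨∑ i, (a i : F[X]).comp (B i j), h a j⟩
  map_add' a a' := by ext; simp [add_comp, Finset.sum_add_distrib]
  map_smul' c a := by ext; simp [smul_comp]

lemma sumCompMap_injective {M : Set (Fin 2 → F[X])} {B : Fin 2 → Fin 2 → F[X]}
    (hB : IsBasisOf q M B) {D E : Fin 2 → ℕ} (h) : Function.Injective (sumCompMap q B D E h) := by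
  rw [← LinearMap.ker_eq_bot, LinearMap.ker_eq_bot']
  refine fun a ha => funext fun i => Subtype.ext ?_
  refine hB.2.2 (fun i => a i) (fun i => IsLin.of_mem_qLinLE (a i).2) (funext fun j => ?_) i
  exact congrArg Subtype.val (congrFun ha j)

end QLinearized

lemma finrank_eq_add_of_range_eq_ker {K U V W : Type*} [Field K] [AddCommGroup U] [Module K U]
    [AddCommGroup V] [Module K V] [AddCommGroup W] [Module K W] [FiniteDimensional K V]
    {ψ : U →ₗ[K] V} {φ : V →ₗ[K] W} (hψ : Function.Injective ψ) (hφ : Function.Surjective φ)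
    (h : LinearMap.range ψ = LinearMap.ker φ) :
    Module.finrank K V = Module.finrank K U + Module.finrank K W := by
  rw [← φ.finrank_range_add_finrank_ker, ← h, LinearMap.range_eq_top.2 hφ, finrank_top,
    LinearMap.finrank_range_of_inj hψ, add_comm]

lemma LinearIndependent.exists_linearMap_apply_eq {K V W ι : Type*} [Field K] [AddCommGroup V]
    [Module K V] [AddCommGroup W] [Module K W] [Fintype ι] {g : ι → V}
    (hg : LinearIndependent K g) (v : ι → W) : ∃ ℓ : V →ₗ[K] W, ∀ i, ℓ (g i) = v i := by
  classical
  obtain ⟨π, hπ⟩ := LinearMap.exists_leftInverse_of_injective (Fintype.linearCombination K g)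
    (LinearMap.ker_eq_bot.2 (linearIndependent_iff_injective_fintypeLinearCombination.1 hg))
  refine ⟨Fintype.linearCombination K v ∘ₗ π, fun i => ?_⟩
  have := LinearMap.congr_fun hπ (Pi.single i 1)
  simp only [LinearMap.comp_apply, Fintype.linearCombination_apply_single, one_smul,
    LinearMap.id_apply] at this
  simp [this, Fintype.linearCombination_apply_single]

section LeadingMonomial

variable {F : Type*} [Field F] {q l : ℕ}

lemma isMonOrder_wlt (w : Fin l → ℕ) : IsMonOrder (wlt w) where
  irrefl m h := by rcases h with h | ⟨-, h⟩ <;> simp at h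
  trans a b c hab hbc := by
    unfold wlt at *
    rcases hab with h | ⟨h, h'⟩ <;> rcases hbc with h₂ | ⟨h₂, h₂'⟩
    all_goals first | (left; omega) | (right; exact ⟨by omega, h'.trans h₂'⟩)
  total a b := by
    obtain ⟨ka, pa⟩ := a
    obtain ⟨kb, pb⟩ := b
    simp only [wlt, Mon.mk.injEq]
    rcases lt_trichotomy pa pb with h | rfl | h <;> omega
  comp_gt m j hj := Or.inl (by simp; omega)
  comp_mono m1 m2 j h := by unfold wlt at *; simp only at *; omega

variable {lt : Mon l → Mon l → Prop}

lemma IsMonOrder.shift_le_shift (hlt : IsMonOrder lt) {m m' : Mon l} (h : m = m' ∨ lt m m')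
    {t s : ℕ} (hts : t ≤ s) :
    (⟨t + m.k, m.pos⟩ : Mon l) = ⟨s + m'.k, m'.pos⟩ ∨ lt ⟨t + m.k, m.pos⟩ ⟨s + m'.k, m'.pos⟩ := by
  have h₁ : (⟨t + m.k, m.pos⟩ : Mon l) = ⟨t + m'.k, m'.pos⟩ ∨
      lt ⟨t + m.k, m.pos⟩ ⟨t + m'.k, m'.pos⟩ :=
    h.imp (fun e => by subst e; rfl) (hlt.comp_mono _ _ t)
  obtain rfl | hts := hts.eq_or_lt
  · exact h₁
  have h₂ : lt ⟨t + m'.k, m'.pos⟩ ⟨s + m'.k, m'.pos⟩ := by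
    simpa [show s - t + (t + m'.k) = s + m'.k by omega] using
      hlt.comp_gt ⟨t + m'.k, m'.pos⟩ (s - t) (by omega)
  exact Or.inr (h₁.elim (· ▸ h₂) (hlt.trans _ _ _ · h₂))

lemma IsLM.k_le (hlt : IsMonOrder lt) {f : Fin l → F[X]} {mo : Mon l} (h : IsLM q lt f mo)
    {j : ℕ} (hj : q ^ j ∈ (f mo.pos).support) : j ≤ mo.k := by
  by_contra! hjk
  have hgt : lt mo ⟨j, mo.pos⟩ := by
    simpa [show j - mo.k + mo.k = j by omega] using hlt.comp_gt mo (j - mo.k) (by omega)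
  rcases h.2 ⟨j, mo.pos⟩ hj with h | h
  · exact hlt.irrefl mo (h ▸ hgt)
  · exact hlt.irrefl mo (hlt.trans _ _ _ hgt h)

lemma IsLM.natDegree_eq (hq : 1 < q) (hlt : IsMonOrder lt) {f : Fin l → F[X]} {mo : Mon l}
    (hf : IsLinVec q f) (h : IsLM q lt f mo) : (f mo.pos).natDegree = q ^ mo.k := by
  have hdeg := natDegree_mem_support_of_nonzero (support_nonempty.1 ⟨_, h.1⟩)
  obtain ⟨s, hs⟩ := hf mo.pos _ hdeg
  refine le_antisymm ?_ (le_natDegree_of_mem_supp _ h.1)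
  exact hs ▸ Nat.pow_le_pow_right (by omega) (h.k_le hlt (hs ▸ hdeg))

lemma IsLM.add_of_lt (hlt : IsMonOrder lt) {f g : Fin l → F[X]} {mf mg : Mon l}
    (hf : IsLM q lt f mf) (hg : IsLM q lt g mg) (h : lt mf mg) : IsLM q lt (f + g) mg := by
  have hmg : ¬ MonOf q f mg := fun hm =>
    (hf.2 mg hm).elim (fun e => hlt.irrefl mf (e ▸ h)) (hlt.irrefl _ <| hlt.trans _ _ _ h ·)
  refine ⟨?_, fun mo hmo => ?_⟩
  · show q ^ mg.k ∈ (f mg.pos + g mg.pos).support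
    rw [mem_support_iff, coeff_add, notMem_support_iff.1 hmg, zero_add]
    exact mem_support_iff.1 hg.1
  · rcases Finset.mem_union.1 (support_add hmo) with hmo | hmo
    · exact Or.inr ((hf.2 mo hmo).elim (· ▸ h) (hlt.trans _ _ _ · h))
    · exact hg.2 mo hmo

variable {w : Fin l → ℕ}

lemma wlt.wt_le {a b : Mon l} (h : wlt w a b) : a.k + w a.pos ≤ b.k + w b.pos := by
  rcases h with h | ⟨h, -⟩ <;> omega

lemma IsLM.wt_le {f : Fin l → F[X]} {mo mo' : Mon l} (h : IsLM q (wlt w) f mo)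
    (h' : MonOf q f mo') : mo'.k + w mo'.pos ≤ mo.k + w mo.pos :=
  (h.2 mo' h').elim (fun e => e ▸ le_rfl) wlt.wt_le

lemma WDegIs.eq_of_isLM {f : Fin l → F[X]} {d : ℕ} {mo : Mon l} (hd : WDegIs q w f d)
    (h : IsLM q (wlt w) f mo) : d = mo.k + w mo.pos := by
  obtain ⟨⟨mo', hmo', rfl⟩, hle⟩ := hd
  exact le_antisymm (h.wt_le hmo') (hle mo h.1)

lemma IsLM.wt_le_of_add {f g : Fin l → F[X]} {mf : Mon l} (hf : IsLM q (wlt w) f mf)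
    (hg : g = 0 ∨ ∃ mg, IsLM q (wlt w) g mg ∧ mg.pos ≠ mf.pos) {N : ℕ}
    (hN : ∀ mo, MonOf q (f + g) mo → mo.k + w mo.pos ≤ N) : mf.k + w mf.pos ≤ N := by
  obtain rfl | ⟨mg, hg, hpos⟩ := hg
  · exact hN mf (by simpa using hf.1)
  rcases (isMonOrder_wlt w).total mf mg with h | rfl | h
  · exact h.wt_le.trans (hN mg (hf.add_of_lt (isMonOrder_wlt w) hg h).1)
  · exact absurd rfl hpos
  · exact hN mf (add_comm f g ▸ (hg.add_of_lt (isMonOrder_wlt w) hf h).1)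

end LeadingMonomial

section Frobenius

variable {Fq : Type*} [Field Fq] [Fintype Fq] {F : Type*} [Field F] [Algebra Fq F]

local notation "q" => Fintype.card Fq

lemma frobeniusAlgHom_pow_apply {R : Type*} [CommRing R] [Algebra Fq R] (t : ℕ) (x : R) :
    (FiniteField.frobeniusAlgHom Fq R ^ t) x = x ^ q ^ t := by
  rw [AlgHom.coe_pow, FiniteField.coe_frobeniusAlgHom, pow_iterate]

lemma exists_eq_mul_of_mem_support_pow_card_pow {b : F[X]} {t i : ℕ}
    (hi : i ∈ (b ^ q ^ t).support) : ∃ j ∈ b.support, i = j * q ^ t := by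
  rw [← frobeniusAlgHom_pow_apply (Fq := Fq), ← b.sum_monomial_eq, Polynomial.sum_def,
    map_sum, mem_support_iff, finsetSum_coeff] at hi
  obtain ⟨j, hj, hne⟩ := Finset.exists_ne_zero_of_sum_ne_zero hi
  rw [frobeniusAlgHom_pow_apply, monomial_pow, coeff_monomial] at hne
  exact ⟨j, hj, (ite_ne_right_iff.1 hne).1.symm⟩

lemma IsLin.exists_of_mem_support_comp {a b : F[X]} (ha : IsLin q a) (hb : IsLin q b) {i : ℕ}
    (hi : i ∈ (a.comp b).support) :
    ∃ t u, q ^ t ∈ a.support ∧ q ^ u ∈ b.support ∧ i = q ^ (t + u) := by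
  rw [comp_eq_sum_left, Polynomial.sum_def, mem_support_iff, finsetSum_coeff] at hi
  obtain ⟨s, hs, hne⟩ := Finset.exists_ne_zero_of_sum_ne_zero hi
  obtain ⟨t, rfl⟩ := ha s hs
  rw [coeff_C_mul] at hne
  obtain ⟨j, hj, rfl⟩ := exists_eq_mul_of_mem_support_pow_card_pow
    (mem_support_iff.2 (right_ne_zero_of_mul hne))
  obtain ⟨u, rfl⟩ := hb j hj
  exact ⟨t, u, hs, hj, by rw [pow_add, mul_comm]⟩

lemma IsLin.comp {a b : F[X]} (ha : IsLin q a) (hb : IsLin q b) : IsLin q (a.comp b) :=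
  fun i hi => by
    obtain ⟨t, u, -, -, rfl⟩ := ha.exists_of_mem_support_comp hb hi
    exact ⟨t + u, rfl⟩

lemma IsLin.eval_add {a : F[X]} (ha : IsLin q a) (x y : F) :
    a.eval (x + y) = a.eval x + a.eval y := by
  simp only [eval_eq_sum, Polynomial.sum_def, ← Finset.sum_add_distrib]
  refine Finset.sum_congr rfl fun i hi => ?_
  obtain ⟨t, rfl⟩ := ha i hi
  simp only [← frobeniusAlgHom_pow_apply (Fq := Fq), map_add, mul_add]

lemma IsLin.eval_zero {a : F[X]} (ha : IsLin q a) : a.eval 0 = 0 := by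
  simpa using ha.eval_add 0 0

lemma IsLin.eval_smul {a : F[X]} (ha : IsLin q a) (c : Fq) (x : F) :
    a.eval (c • x) = c • a.eval x := by
  simp only [eval_eq_sum, Polynomial.sum_def, Finset.smul_sum]
  refine Finset.sum_congr rfl fun i hi => ?_
  obtain ⟨t, rfl⟩ := ha i hi
  simp only [← frobeniusAlgHom_pow_apply (Fq := Fq), map_smul, mul_smul_comm]

variable {l : ℕ}

lemma IsLM.comp {lt : Mon l → Mon l → Prop} (hlt : IsMonOrder lt) {b : Fin l → F[X]}
    {mo : Mon l} (hb : IsLinVec q b) (h : IsLM q lt b mo) {a : F[X]} (ha : IsLin q a) {s : ℕ}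
    (hs : a.natDegree = q ^ s) : IsLM q lt (fun j => a.comp (b j)) ⟨s + mo.k, mo.pos⟩ := by
  have hq : 1 < q := Fintype.one_lt_card
  refine ⟨?_, fun mo' hmo' => ?_⟩
  · have hdeg : (a.comp (b mo.pos)).natDegree = q ^ (s + mo.k) := by
      rw [natDegree_comp, hs, h.natDegree_eq hq hlt hb, pow_add]
    show q ^ (s + mo.k) ∈ (a.comp (b mo.pos)).support
    rw [← hdeg]
    exact natDegree_mem_support_of_nonzero
      (ne_zero_of_natDegree_gt (hdeg ▸ pow_pos (by omega) _ : 0 < _))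
  · obtain ⟨t, u, ht, hu, hk⟩ := ha.exists_of_mem_support_comp (hb mo'.pos) hmo'
    have hts : t ≤ s := (Nat.pow_le_pow_iff_right hq).1 (hs ▸ le_natDegree_of_mem_supp _ ht)
    obtain ⟨k', pos'⟩ := mo'
    obtain rfl : k' = t + u := Nat.pow_right_injective hq hk
    exact hlt.shift_le_shift (h.2 ⟨u, pos'⟩ hu) hts

lemma comp_mem_qLinLE_of_isLM {b : Fin l → F[X]} {w : Fin l → ℕ} {mo : Mon l}
    (hb : IsLinVec q b) (h : IsLM q (wlt w) b mo) {N : ℕ} (hN : mo.k + w mo.pos ≤ N) {a : F[X]}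
    (ha : a ∈ qLinLE F q (N - (mo.k + w mo.pos))) (j : Fin l) :
    a.comp (b j) ∈ qLinLE F q (N - w j) := by
  have hq : 1 < q := Fintype.one_lt_card
  refine mem_qLinLE.2 fun e he => ?_
  obtain ⟨t, u, ht, hu, rfl⟩ := (IsLin.of_mem_qLinLE ha).exists_of_mem_support_comp (hb j) he
  have ht := ((mem_qLinLE_iff hq).1 ha).2 t ht
  have hu : u + w j ≤ mo.k + w mo.pos := h.wt_le (mo' := ⟨u, j⟩) hu
  exact ⟨t + u, by omega, rfl⟩

variable {B : Fin 2 → Fin 2 → F[X]} {w : Fin 2 → ℕ} {mb : Fin 2 → Mon 2}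

lemma add_wt_le_of_sum_comp (hB : ∀ i, IsLinVec q (B i)) (hmb : ∀ i, IsLM q (wlt w) (B i) (mb i))
    (hpos : ∀ i, (mb i).pos = i) {a : Fin 2 → F[X]} (ha : ∀ i, IsLin q (a i)) {N : ℕ}
    (hN : ∀ mo, MonOf q (fun j => ∑ i, (a i).comp (B i j)) mo → mo.k + w mo.pos ≤ N)
    (i : Fin 2) {t : ℕ} (ht : q ^ t ∈ (a i).support) : t + ((mb i).k + w i) ≤ N := by
  have hq : 1 < q := Fintype.one_lt_card
  have hLM : ∀ i, a i ≠ 0 → ∃ s, (∀ t, q ^ t ∈ (a i).support → t ≤ s) ∧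
      IsLM q (wlt w) (fun j => (a i).comp (B i j)) ⟨s + (mb i).k, i⟩ := by
    intro i hi
    obtain ⟨s, hs⟩ := ha i _ (natDegree_mem_support_of_nonzero hi)
    refine ⟨s, fun t ht => (Nat.pow_le_pow_iff_right hq).1 (hs ▸ le_natDegree_of_mem_supp _ ht), ?_⟩
    simpa [hpos] using (hmb i).comp (isMonOrder_wlt w) (hB i) (ha i) hs
  obtain ⟨s, hts, hs⟩ := hLM i (support_nonempty.1 ⟨_, ht⟩)
  have hsplit : (fun j => ∑ i', (a i').comp (B i' j)) =
      (fun j => (a i).comp (B i j)) + fun j => (a i.rev).comp (B i.rev j) := by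
    funext j
    fin_cases i <;> simp [Fin.sum_univ_two, add_comm]
  have hwt := hs.wt_le_of_add (g := fun j => (a i.rev).comp (B i.rev j)) ?_ (hsplit ▸ hN)
  · have := hts t ht
    simp only at hwt
    omega
  by_cases h : a i.rev = 0
  · exact Or.inl (funext fun j => by simp [h])
  obtain ⟨s', -, hs'⟩ := hLM _ h
  exact Or.inr ⟨_, hs', by simp only; fin_cases i <;> decide⟩

lemma mem_qLinLE_of_sum_comp_mem (hB : ∀ i, IsLinVec q (B i))
    (hmb : ∀ i, IsLM q (wlt w) (B i) (mb i)) (hpos : ∀ i, (mb i).pos = i) {a : Fin 2 → F[X]}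
    (ha : ∀ i, IsLin q (a i)) {N : ℕ} (hwN : ∀ j, w j ≤ N)
    (hsum : ∀ j, ∑ i, (a i).comp (B i j) ∈ qLinLE F q (N - w j)) (i : Fin 2) :
    a i ∈ qLinLE F q (N - ((mb i).k + w i)) := by
  have hq : 1 < q := Fintype.one_lt_card
  have hN : ∀ mo, MonOf q (fun j => ∑ i, (a i).comp (B i j)) mo → mo.k + w mo.pos ≤ N :=
    fun mo hmo => by
      have := ((mem_qLinLE_iff hq).1 (hsum mo.pos)).2 _ hmo
      have := hwN mo.pos
      omega
  refine (mem_qLinLE_iff hq).2 ⟨ha i, fun t ht => ?_⟩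
  have := add_wt_le_of_sum_comp hB hmb hpos ha hN i ht
  omega

lemma sum_comp_mem_interpMod {n : ℕ} {g r : Fin n → F} (hB : ∀ i, B i ∈ InterpMod q g r)
    {a : Fin 2 → F[X]} (ha : ∀ i, IsLin q (a i)) :
    (fun j => ∑ i, (a i).comp (B i j)) ∈ InterpMod q g r := by
  refine ⟨fun j => ?_, fun idx => ?_⟩
  · simp only [Fin.sum_univ_two]
    exact ((ha 0).comp ((hB 0).1 j)).add ((ha 1).comp ((hB 1).1 j))
  · simp only [eval_finsetSum, eval_comp, ← Finset.sum_add_distrib]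
    refine Finset.sum_eq_zero fun i _ => ?_
    rw [← (ha i).eval_add, (hB i).2 idx, (ha i).eval_zero]

end Frobenius

section Counting

variable {Fq F : Type*} [Field Fq] [Fintype Fq] [Field F] [Fintype F] [Algebra Fq F]

local notation "q" => Fintype.card Fq

/-- Moore interpolation. Evaluation maps `q`-linearized polynomials of `q`-degree `< m` injectively
(their degree is `< |F| = q ^ m`), hence bijectively, onto the `F_q`-linear maps `F → F`. -/
theorem exists_mem_qLinLE_eval_eq {n : ℕ} {g : Fin n → F} (hg : LinearIndependent Fq g)
    (v : Fin n → F) : ∃ f ∈ qLinLE F q (Module.finrank Fq F - 1), ∀ i, f.eval (g i) = v i := by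
  set m := Module.finrank Fq F
  have hm : 0 < m := Module.finrank_pos
  have hq : 1 < q := Fintype.one_lt_card
  let ev : qLinLE F q (m - 1) →ₗ[F] F →ₗ[Fq] F :=
    { toFun f :=
        { toFun x := (f : F[X]).eval x
          map_add' := (IsLin.of_mem_qLinLE f.2).eval_add
          map_smul' := (IsLin.of_mem_qLinLE f.2).eval_smul }
      map_add' f f' := by ext; simp
      map_smul' c f := by ext; simp }
  have hinj : Function.Injective ev := by
    rw [← LinearMap.ker_eq_bot, LinearMap.ker_eq_bot']
    refine fun f hf => Subtype.ext (eq_zero_of_natDegree_lt_card_of_eval_eq_zero _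
      Function.injective_id (fun x => LinearMap.congr_fun hf x) ?_)
    calc (f : F[X]).natDegree ≤ q ^ (m - 1) := natDegree_le_of_mem_qLinLE (by omega) f.2
      _ < q ^ m := Nat.pow_lt_pow_right hq (by omega)
      _ = Fintype.card F := Module.card_eq_pow_finrank.symm
  have hsurj := (LinearMap.injective_iff_surjective_of_finrank_eq_finrank
    (by rw [finrank_qLinLE hq, Module.finrank_linearMap_self]; omega)).1 hinj
  obtain ⟨ℓ, hℓ⟩ := hg.exists_linearMap_apply_eq v
  obtain ⟨f, rfl⟩ := hsurj ℓ
  exact ⟨f, f.2, hℓ⟩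

lemma interpEval_surjective {n : ℕ} {g : Fin n → F} (hg : LinearIndependent Fq g)
    (r : Fin n → F) {D : Fin 2 → ℕ} (hD : Module.finrank Fq F - 1 ≤ D 0) :
    Function.Surjective (interpEval q g r D) := by
  intro v
  obtain ⟨f, hf, hfv⟩ := exists_mem_qLinLE_eval_eq hg v
  refine ⟨Pi.single (M := fun j => qLinLE F q (D j)) 0 ⟨f, qLinLE_mono hD hf⟩, ?_⟩
  funext
  simp [interpEval, hfv]

theorem IsBasisOf.lm_k_add_lm_k_eq {n : ℕ} {g r : Fin n → F} (hg : LinearIndependent Fq g)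
    {B : Fin 2 → Fin 2 → F[X]} (hB : IsBasisOf q (InterpMod q g r) B) {w : Fin 2 → ℕ}
    {mb : Fin 2 → Mon 2} (hmb : ∀ i, IsLM q (wlt w) (B i) (mb i)) (hpos : ∀ i, (mb i).pos = i) :
    (mb 0).k + (mb 1).k = n := by
  have hq : 1 < q := Fintype.one_lt_card
  have hBlin : ∀ i, IsLinVec q (B i) := fun i => (hB.1 i).1
  set N := Module.finrank Fq F + ((mb 0).k + w 0) + ((mb 1).k + w 1) + w 0 + w 1
  have hwN : ∀ j, w j ≤ N := by intro j; fin_cases j <;> simp <;> omega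
  have hℓN : ∀ i, (mb i).k + w (mb i).pos ≤ N := by
    intro i; fin_cases i <;> simp [hpos] <;> omega
  let ψ := sumCompMap q B (fun i => N - ((mb i).k + w (mb i).pos)) (fun j => N - w j)
    fun a j => Submodule.sum_mem _ fun i _ =>
      comp_mem_qLinLE_of_isLM (hBlin i) (hmb i) (hℓN i) (a i).2 j
  let φ := interpEval q g r fun j => N - w j
  have hrange : LinearMap.range ψ = LinearMap.ker φ := by
    refine le_antisymm ?_ fun f hf => ?_
    · rintro _ ⟨a, rfl⟩
      rw [LinearMap.mem_ker, interpEval_eq_zero_iff]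
      exact sum_comp_mem_interpMod (a := fun i => a i) hB.1 fun i => IsLin.of_mem_qLinLE (a i).2
    · obtain ⟨a, ha, hfa⟩ := hB.2.1 _ ((interpEval_eq_zero_iff f).1 (LinearMap.mem_ker.1 hf))
      have hsum : ∀ j, ∑ i, (a i).comp (B i j) ∈ qLinLE F q (N - w j) :=
        fun j => congrFun hfa j ▸ (f j).2
      refine ⟨fun i => ⟨a i, ?_⟩, funext fun j => Subtype.ext (congrFun hfa j).symm⟩
      simpa [hpos] using mem_qLinLE_of_sum_comp_mem hBlin hmb hpos ha hwN hsum i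
  have key := finrank_eq_add_of_range_eq_ker (sumCompMap_injective hB _)
    (interpEval_surjective hg r (by simp only [N]; omega)) hrange
  rw [Module.finrank_fin_fun] at key
  simp only [Module.finrank_pi_fintype, finrank_qLinLE hq, Fin.sum_univ_two, hpos] at key
  omega

end Counting

theorem stmt17_general {Fq F : Type*} [Field Fq] [Fintype Fq] [Field F] [Fintype F] [Algebra Fq F]
    {n k : ℕ} (hk : 0 < k) (g : Fin n → F) (hg : LinearIndependent Fq g)
    (r : Fin n → F)
    (B : Fin 2 → Fin 2 → Polynomial F)
    (hB : IsBasisOf (Fintype.card Fq) (InterpMod (Fintype.card Fq) g r) B)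
    (mb : Fin 2 → Mon 2)
    (hmb : ∀ i, IsLM (Fintype.card Fq) (wlt ![0, k - 1]) (B i) (mb i))
    (hpos : ∀ i, (mb i).pos = i)
    (l1 l2 : ℕ)
    (h1 : WDegIs (Fintype.card Fq) ![0, k - 1] (B 0) l1)
    (h2 : WDegIs (Fintype.card Fq) ![0, k - 1] (B 1) l2) :
    l1 + l2 = n + k - 1 := by
  have hsum := hB.lm_k_add_lm_k_eq hg hmb hpos
  have hl1 := h1.eq_of_isLM (hmb 0)
  have hl2 := h2.eq_of_isLM (hmb 1)
  simp [hpos] at hl1 hl2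
  omega

/-- If `{b⁰, b¹}` is a minimal basis (leading positions `1` resp. `2`) of the
interpolation module `M(r)` with respect to the `(0, k-1)`-weighted
term-over-position order, then the `(0, k-1)`-weighted `q`-degrees `l1, l2` of
`b⁰, b¹` satisfy `l1 + l2 = n + k - 1`. -/
theorem stmt17 {Fq F : Type*} [Field Fq] [Fintype Fq] [Field F] [Fintype F] [Algebra Fq F]
    {n k : ℕ} (hk : 0 < k) (hkn : k ≤ n) (g : Fin n → F) (hg : LinearIndependent Fq g)
    (r : Fin n → F)
    (B : Fin 2 → Fin 2 → Polynomial F)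
    (hB : IsBasisOf (Fintype.card Fq) (InterpMod (Fintype.card Fq) g r) B)
    (mb : Fin 2 → Mon 2)
    (hmb : ∀ i, IsLM (Fintype.card Fq) (wlt ![0, k - 1]) (B i) (mb i))
    (hpos : ∀ i, (mb i).pos = i)
    (l1 l2 : ℕ)
    (h1 : WDegIs (Fintype.card Fq) ![0, k - 1] (B 0) l1)
    (h2 : WDegIs (Fintype.card Fq) ![0, k - 1] (B 1) l2) :
    l1 + l2 = n + k - 1 :=
  stmt17_general hk g hg r B hB mb hmb hpos l1 l2 h1 h2
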